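/- arXiv:1709.04764 — 4 statements merged into one kernel-verified Lean document; each statement's English description precedes it below -/
import Mathlib

section
/- If x is a feasible flow (A_u x = b_s) and y is a nonzero flow with A y = 0 (a circulation) such that for every edge e, y_e ≠ 0 implies x_e and y_e have the same sign and |y_e| ≤ |x_e|, then x - y is feasible and F(x - y) < F(x), where F(x) = (1/2) Σ_e d_e (x_e² + λ|x_e|) with d_e > 0. (This is the key lemma for removing cycles from optimal flows.) -/
/-!
Feasibility is preserved because `A_u` is a block of rows of `A`, so it also kills `y`.
On an edge where `y_e ≠ 0`, `y_e` has the sign of `x_e` and is no larger in absolute value,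
so subtracting it moves `x_e` strictly towards `0`; the edge cost `t² + λ|t|` is strictly
increasing in `|t|`, and edges with `y_e = 0` are unchanged.
-/

open Matrix

theorem Matrix.submatrix_id_mulVec {l m n α : Type*} [Fintype n] [NonUnitalNonAssocSemiring α]
    (M : Matrix m n α) (v : n → α) (e : l → m) :
    M.submatrix e id *ᵥ v = (M *ᵥ v) ∘ e :=
  submatrix_mulVec_equiv M v e (Equiv.refl n)

section OrderedCommRing

variable {α : Type*} [CommRing α] [LinearOrder α] [IsStrictOrderedRing α]

theorem abs_sub_lt_abs_of_mul_pos {a b : α} (hab : 0 < a * b) (hba : |b| ≤ |a|) :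
    |a - b| < |a| := by
  rw [abs_sub_lt_iff]
  rcases mul_pos_iff.mp hab with ⟨ha, hb⟩ | ⟨ha, hb⟩
  · rw [abs_of_pos ha, abs_of_pos hb] at *
    constructor <;> linarith
  · rw [abs_of_neg ha, abs_of_neg hb] at *
    constructor <;> linarith

theorem sq_add_mul_abs_lt_of_abs_lt {c s t : α} (hc : 0 ≤ c) (hst : |s| < |t|) :
    s ^ 2 + c * |s| < t ^ 2 + c * |t| :=
  add_lt_add_of_lt_of_le (sq_lt_sq.mpr hst) (mul_le_mul_of_nonneg_left hst.le hc)

end OrderedCommRing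

/-- Subtracting a nonzero circulation `y` that agrees in sign with
a feasible flow `x` and satisfies `|yₑ| ≤ |xₑ|` componentwise yields a feasible
flow of strictly smaller objective value. -/
theorem stmt_4 (nl nu m : ℕ)
    (A : Matrix (Fin nl ⊕ Fin nu) (Fin m) ℝ)
    (d : Fin m → ℝ) (hd : ∀ e, 0 < d e)
    (lam : ℝ) (hlam : 0 ≤ lam)
    (F : (Fin m → ℝ) → ℝ)
    (hF : F = fun x => (1 / 2) * ∑ e, d e * ((x e) ^ 2 + lam * |x e|))
    (b : Fin nu → ℝ) (x y : Fin m → ℝ)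
    (hx : A.submatrix Sum.inr id *ᵥ x = b)
    (hy0 : y ≠ 0) (hcirc : A *ᵥ y = 0)
    (hsign : ∀ e, y e ≠ 0 → 0 < x e * y e ∧ |y e| ≤ |x e|) :
    A.submatrix Sum.inr id *ᵥ (x - y) = b ∧ F (x - y) < F x := by
  refine ⟨by rw [mulVec_sub, hx, submatrix_id_mulVec, hcirc, Pi.zero_comp, sub_zero], ?_⟩
  have edge_lt : ∀ e, y e ≠ 0 →
      d e * ((x - y) e ^ 2 + lam * |(x - y) e|) < d e * (x e ^ 2 + lam * |x e|) := fun e he =>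
    mul_lt_mul_of_pos_left (sq_add_mul_abs_lt_of_abs_lt hlam
      (abs_sub_lt_abs_of_mul_pos (hsign e he).1 (hsign e he).2)) (hd e)
  have edge_le : ∀ e ∈ Finset.univ,
      d e * ((x - y) e ^ 2 + lam * |(x - y) e|) ≤ d e * (x e ^ 2 + lam * |x e|) := by
    intro e _
    by_cases he : y e = 0
    · simp [he]
    · exact (edge_lt e he).le
  obtain ⟨e₀, he₀⟩ : ∃ e, y e ≠ 0 := Function.ne_iff.mp hy0
  subst hF
  exact mul_lt_mul_of_pos_left
    (Finset.sum_lt_sum edge_le ⟨e₀, Finset.mem_univ e₀, edge_lt e₀ he₀⟩) one_half_pos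
end

section
/- The optimal flow x* minimizing F(x) = (1/2) Σ_e d_e (x_e² + λ|x_e|) subject to A_u x = b_s has acyclic support: if each edge with x*_e ≠ 0 is oriented in the direction of positive flow, the resulting directed subgraph contains no directed cycle. -/
/-!
A directed cycle of edges along which the flow is positive yields a nonzero circulation `c`
(`A c = 0`, so `x* - t c` stays feasible) that has the sign of `x*` wherever it is nonzero.
For small `t > 0`, subtracting `t c` strictly shrinks `|x*_e|` on the support of `c` and leaves
the other coordinates unchanged; since the cost is strictly increasing in each `|x_e|`, this
contradicts the optimality of `x*`.
-/

open Matrix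

def Conforms {ι : Type*} (c x : ι → ℝ) : Prop :=
  ∀ i, c i ≠ 0 → 0 < x i * c i

namespace Conforms

variable {ι : Type*} {c c' x : ι → ℝ}

theorem mul_nonneg (h : Conforms c x) (i : ι) : 0 ≤ x i * c i := by
  by_cases hc : c i = 0
  · simp [hc]
  · exact (h i hc).le

theorem add (h : Conforms c x) (h' : Conforms c' x) : Conforms (c + c') x := by
  intro i hi
  rw [Pi.add_apply, mul_add]
  by_contra hle
  have hc : c i = 0 := by
    by_contra hc; linarith [h i hc, h'.mul_nonneg i]
  have hc' : c' i = 0 := by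
    by_contra hc'; linarith [h' i hc', h.mul_nonneg i]
  simp [hc, hc'] at hi

theorem add_ne_zero (h : Conforms c x) (h' : Conforms c' x) (hc : c ≠ 0) : c + c' ≠ 0 := by
  obtain ⟨i, hi⟩ := Function.ne_iff.1 hc
  refine Function.ne_iff.2 ⟨i, fun hsum => ?_⟩
  have := congrArg (x i * ·) hsum
  simp only [Pi.add_apply, Pi.zero_apply, mul_add, mul_zero] at this
  linarith [h i hi, h'.mul_nonneg i]

theorem single [DecidableEq ι] {e : ι} {a : ℝ} (h : 0 < x e * a) : Conforms (Pi.single e a) x := by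
  intro i hi
  by_cases hie : i = e
  · subst hie; simpa using h
  · simp [hie] at hi

end Conforms

theorem abs_sub_mul_lt {a b t : ℝ} (hab : 0 < a * b) (ht : 0 < t) (hle : t * |b| ≤ |a|) :
    |a - t * b| < |a| := by
  rcases lt_or_gt_of_ne (left_ne_zero_of_mul hab.ne') with ha | ha
  · have hb : b < 0 := neg_of_mul_pos_right hab ha.le
    rw [abs_of_neg ha, abs_of_neg hb] at hle
    rw [abs_of_nonpos (by nlinarith), abs_of_neg ha]
    nlinarith
  · have hb : 0 < b := pos_of_mul_pos_right hab ha.le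
    rw [abs_of_pos ha, abs_of_pos hb] at hle
    rw [abs_of_nonneg (by nlinarith), abs_of_pos ha]
    nlinarith

theorem exists_pos_mul_abs_le {ι : Type*} [Finite ι] {c x : ι → ℝ}
    (h : ∀ i, c i ≠ 0 → x i ≠ 0) : ∃ t > 0, ∀ i, t * |c i| ≤ |x i| := by
  have hev : ∀ i, ∀ᶠ t in nhdsWithin (0 : ℝ) (Set.Ioi 0), t * |c i| ≤ |x i| := by
    intro i
    by_cases hc : c i = 0
    · simp [hc]
    · have hlim : Filter.Tendsto (fun t : ℝ => t * |c i|) (nhdsWithin 0 (Set.Ioi 0))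
          (nhds 0) :=
        ((continuous_mul_const |c i|).tendsto' 0 0 (zero_mul _)).mono_left nhdsWithin_le_nhds
      exact hlim.eventually (ge_mem_nhds (abs_pos.2 (h i hc)))
  obtain ⟨t, hall, ht⟩ := ((Filter.eventually_all.2 hev).and self_mem_nhdsWithin).exists
  exact ⟨t, ht, hall⟩

theorem Conforms.exists_mulVec_eq_abs_lt {κ ι : Type*} [Fintype ι] {B : Matrix κ ι ℝ}
    {c x : ι → ℝ} (hconf : Conforms c x) (hker : B *ᵥ c = 0) (hc : c ≠ 0) :
    ∃ z, B *ᵥ z = B *ᵥ x ∧ (∀ i, |z i| ≤ |x i|) ∧ ∃ i, |z i| < |x i| := by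
  obtain ⟨t, ht, hle⟩ :=
    exists_pos_mul_abs_le (c := c) fun i hi => left_ne_zero_of_mul (hconf i hi).ne'
  obtain ⟨i₀, hi₀⟩ := Function.ne_iff.1 hc
  have hshrink : ∀ i, c i ≠ 0 → |x i - t * c i| < |x i| := fun i hi =>
    abs_sub_mul_lt (hconf i hi) ht (hle i)
  refine ⟨x - t • c, by rw [mulVec_sub, mulVec_smul, hker, smul_zero, sub_zero], fun i => ?_,
    i₀, hshrink i₀ hi₀⟩
  by_cases hi : c i = 0
  · simp [hi]
  · exact (hshrink i hi).le

theorem sum_mul_sq_add_mul_abs_lt {ι : Type*} [Fintype ι] {d : ι → ℝ} (hd : ∀ i, 0 < d i)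
    {lam : ℝ} (hlam : 0 ≤ lam) {x y : ι → ℝ} (hle : ∀ i, |y i| ≤ |x i|)
    (hlt : ∃ i, |y i| < |x i|) :
    ∑ i, d i * (y i ^ 2 + lam * |y i|) < ∑ i, d i * (x i ^ 2 + lam * |x i|) := by
  obtain ⟨i₀, hi₀⟩ := hlt
  refine Finset.sum_lt_sum (fun i _ => ?_) ⟨i₀, Finset.mem_univ _, ?_⟩
  · exact mul_le_mul_of_nonneg_left
      (add_le_add (sq_le_sq.2 (hle i)) (mul_le_mul_of_nonneg_left (hle i) hlam)) (hd i).le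
  · have hsq : y i₀ ^ 2 < x i₀ ^ 2 := sq_lt_sq.2 hi₀
    have habs : lam * |y i₀| ≤ lam * |x i₀| := by gcongr
    exact mul_lt_mul_of_pos_left (by linarith) (hd i₀)

section IncidenceMatrix

variable {V ι : Type*} [DecidableEq V] {ends : ι → V × V} {A : Matrix V ι ℝ}

def PositiveFlowAdj (ends : ι → V × V) (x : ι → ℝ) (u w : V) : Prop :=
  ∃ e, (ends e = (u, w) ∧ 0 < x e) ∨ (ends e = (w, u) ∧ x e < 0)

theorem col_eq_of_incidence
    (hA : ∀ i e, A i e = if i = (ends e).1 then 1 else if i = (ends e).2 then -1 else 0)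
    {e : ι} (he : (ends e).1 ≠ (ends e).2) :
    A.col e = Pi.single (ends e).1 1 - Pi.single (ends e).2 1 := by
  ext i
  rw [col_apply, hA, Pi.sub_apply]
  by_cases h1 : i = (ends e).1
  · subst h1; simp [he]
  · by_cases h2 : i = (ends e).2
    · subst h2; simp [he.symm]
    · simp [h1, h2]

theorem exists_conforms_of_transGen [Fintype ι] [DecidableEq ι]
    (hA : ∀ i e, A i e = if i = (ends e).1 then 1 else if i = (ends e).2 then -1 else 0)
    (hsimple : ∀ e, (ends e).1 ≠ (ends e).2) {x : ι → ℝ} {u w : V}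
    (h : Relation.TransGen (PositiveFlowAdj ends x) u w) :
    ∃ c, A *ᵥ c = Pi.single u 1 - Pi.single w 1 ∧ Conforms c x ∧ c ≠ 0 := by
  induction h using Relation.TransGen.trans_induction_on with
  | single hadj =>
    obtain ⟨e, ⟨hend, hpos⟩ | ⟨hend, hneg⟩⟩ := hadj
    · refine ⟨Pi.single e 1, ?_, Conforms.single (by simpa using hpos), by simp⟩
      rw [mulVec_single_one, col_eq_of_incidence hA (hsimple e), hend]
    · refine ⟨Pi.single e (-1), ?_, Conforms.single (by simpa using hneg), by simp⟩
      rw [Pi.single_neg, mulVec_neg, mulVec_single_one, col_eq_of_incidence hA (hsimple e), hend,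
        neg_sub]
  | trans _ _ ih₁ ih₂ =>
    obtain ⟨c₁, hA₁, hconf₁, hc₁⟩ := ih₁
    obtain ⟨c₂, hA₂, hconf₂, -⟩ := ih₂
    exact ⟨c₁ + c₂, by rw [mulVec_add, hA₁, hA₂, sub_add_sub_cancel], hconf₁.add hconf₂,
      hconf₁.add_ne_zero hconf₂ hc₁⟩

end IncidenceMatrix

theorem stmt_5_general (nl nu m : ℕ)
    (ends : Fin m → (Fin nl ⊕ Fin nu) × (Fin nl ⊕ Fin nu))
    (hsimple : ∀ e, (ends e).1 ≠ (ends e).2)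
    (A : Matrix (Fin nl ⊕ Fin nu) (Fin m) ℝ)
    (hA : ∀ i e, A i e =
      if i = (ends e).1 then 1 else if i = (ends e).2 then -1 else 0)
    (d : Fin m → ℝ) (hd : ∀ e, 0 < d e)
    (lam : ℝ) (hlam : 0 ≤ lam)
    (F : (Fin m → ℝ) → ℝ)
    (hF : F = fun x => (1 / 2) * ∑ e, d e * ((x e) ^ 2 + lam * |x e|))
    (b : Fin nu → ℝ)
    (xstar : Fin m → ℝ)
    (hfeas : A.submatrix Sum.inr id *ᵥ xstar = b)
    (hopt : ∀ z, A.submatrix Sum.inr id *ᵥ z = b → F xstar ≤ F z) :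
    ∀ v, ¬ Relation.TransGen
      (fun u w => ∃ e, (ends e = (u, w) ∧ 0 < xstar e) ∨
        (ends e = (w, u) ∧ xstar e < 0)) v v := by
  intro v hcycle
  obtain ⟨c, hAc, hconf, hc⟩ := exists_conforms_of_transGen hA hsimple hcycle
  have hker : A.submatrix Sum.inr id *ᵥ c = 0 := by
    rw [sub_self] at hAc
    ext j
    exact congrFun hAc (Sum.inr j)
  obtain ⟨z, hz, hle, hlt⟩ := hconf.exists_mulVec_eq_abs_lt hker hc
  have hFlt : F z < F xstar := by
    subst hF
    have := sum_mul_sq_add_mul_abs_lt hd hlam hle hlt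
    simp only
    linarith
  exact (hopt z (hz.trans hfeas)).not_gt hFlt

/-- The optimal flow has acyclic support: orienting each edge with
nonzero optimal flow in the direction of positive flow yields a directed
subgraph with no directed cycle. -/
theorem stmt_5 (nl nu m : ℕ)
    (ends : Fin m → (Fin nl ⊕ Fin nu) × (Fin nl ⊕ Fin nu))
    (hsimple : ∀ e, (ends e).1 ≠ (ends e).2)
    (hconn : ∀ i j : Fin nl ⊕ Fin nu,
      Relation.ReflTransGen (fun u v => ∃ e, ends e = (u, v) ∨ ends e = (v, u)) i j)
    (A : Matrix (Fin nl ⊕ Fin nu) (Fin m) ℝ)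
    (hA : ∀ i e, A i e =
      if i = (ends e).1 then 1 else if i = (ends e).2 then -1 else 0)
    (d : Fin m → ℝ) (hd : ∀ e, 0 < d e)
    (lam : ℝ) (hlam : 0 ≤ lam)
    (F : (Fin m → ℝ) → ℝ)
    (hF : F = fun x => (1 / 2) * ∑ e, d e * ((x e) ^ 2 + lam * |x e|))
    (s : Fin nu) (b : Fin nu → ℝ)
    (hb : b = fun j => if j = s then (-1 : ℝ) else 0)
    (xstar : Fin m → ℝ)
    (hfeas : A.submatrix Sum.inr id *ᵥ xstar = b)
    (hopt : ∀ z, A.submatrix Sum.inr id *ᵥ z = b → F xstar ≤ F z) :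
    ∀ v, ¬ Relation.TransGen
      (fun u w => ∃ e, (ends e = (u, w) ∧ 0 < xstar e) ∨
        (ends e = (w, u) ∧ xstar e < 0)) v v :=
  stmt_5_general nl nu m ends hsimple A hA d hd lam hlam F hF b xstar hfeas hopt
end

section
/- Maximum principle for flow-based weights: the optimal flow x* minimizing F(x) = (1/2) Σ_e d_e (x_e² + λ|x_e|) subject to A_u x = b_s yields weights w = A_l x* with w_i ≥ 0 for all i = 1,...,n_l and Σ_i w_i = 1. Consequently, the prediction f(s) = Σ_i w_i f(i) satisfies min_i f(i) ≤ f(s) ≤ max_i f(i). -/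
open Matrix Relation Filter Topology

/-!
If the optimal flow `x` carried flow along a path between two labelled nodes, or around a cycle,
then subtracting a small multiple of that path (a vector conformal to `x`) would preserve the
constraints at the unlabelled nodes and strictly decrease every cost term it touches. Hence,
following the flow backwards from a labelled node with net inflow (`wᵢ < 0`) one meets only
unlabelled nodes, each of which, having net outflow `≤ 0`, again has an incoming flow edge; in a
finite graph this closes a cycle. So `w ≥ 0`, and `∑ wᵢ = 1` because the columns of an incidence
matrix sum to zero while `∑ⱼ bⱼ = -1`. The bounds on `∑ wᵢ fᵢ` are those of a convex combination.
-/

theorem Finite.exists_transGen_self_of_forall_exists_rel {α : Type*} [Finite α]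
    {r : α → α → Prop} {s : Set α} (hs : s.Nonempty) (h : ∀ a ∈ s, ∃ b ∈ s, r b a) :
    ∃ a, TransGen r a a := by
  by_contra! hacyc
  have : Std.Irrefl (TransGen r) := ⟨hacyc⟩
  obtain ⟨a, has, hmin⟩ := (Finite.wellFounded_of_trans_of_irrefl (TransGen r)).has_min s hs
  obtain ⟨b, hbs, hba⟩ := h a has
  exact hmin b hbs (.single hba)

theorem eventually_abs_sub_mul_lt {a c : ℝ} (h : 0 < c * a) :
    ∀ᶠ t in 𝓝[>] 0, |a - t * c| < |a| := by
  rcases mul_pos_iff.mp h with ⟨hc, ha⟩ | ⟨hc, ha⟩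
  · filter_upwards [Ioo_mem_nhdsGT (div_pos ha hc)] with t ⟨ht, hta⟩
    have := (lt_div_iff₀ hc).mp hta
    rw [abs_of_pos ha, abs_of_pos (by linarith)]
    nlinarith
  · filter_upwards [Ioo_mem_nhdsGT (div_pos_of_neg_of_neg ha hc)] with t ⟨ht, hta⟩
    have := (lt_div_iff_of_neg hc).mp hta
    rw [abs_of_neg ha, abs_of_neg (by linarith)]
    nlinarith

section Conformal

variable {E : Type*}

def ConformalTo (σ x : E → ℝ) : Prop :=
  ∀ e, σ e ≠ 0 → 0 < σ e * x e

theorem ConformalTo.mul_nonneg {σ x : E → ℝ} (h : ConformalTo σ x) (e : E) :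
    0 ≤ σ e * x e := by
  by_cases he : σ e = 0
  · simp [he]
  · exact (h e he).le

theorem ConformalTo.add {σ τ x : E → ℝ} (hσ : ConformalTo σ x) (hτ : ConformalTo τ x) :
    ConformalTo (σ + τ) x := by
  intro e he
  rw [Pi.add_apply, add_mul]
  by_cases hσe : σ e = 0
  · rw [Pi.add_apply, hσe, zero_add] at he
    rw [hσe, zero_mul, zero_add]
    exact hτ e he
  · exact add_pos_of_pos_of_nonneg (hσ e hσe) (hτ.mul_nonneg e)

theorem ConformalTo.add_ne_zero {σ τ x : E → ℝ} (hσ : ConformalTo σ x) (hτ : ConformalTo τ x)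
    (hσ0 : σ ≠ 0) : σ + τ ≠ 0 := by
  obtain ⟨e, he⟩ := Function.ne_iff.mp hσ0
  refine Function.ne_iff.mpr ⟨e, fun h => ?_⟩
  have := add_pos_of_pos_of_nonneg (hσ e he) (hτ.mul_nonneg e)
  rw [← add_mul, ← Pi.add_apply, h, Pi.zero_apply, zero_mul] at this
  exact this.false

theorem conformalTo_single [DecidableEq E] {x : E → ℝ} {e : E} {c : ℝ} (h : 0 < c * x e) :
    ConformalTo (Pi.single e c) x := by
  intro e' he'
  obtain rfl : e' = e := by by_contra hne; exact he' (by simp [hne])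
  simpa using h

end Conformal

section Cost

variable {E : Type*} [Fintype E]

noncomputable def flowCost (d : E → ℝ) (lam : ℝ) (x : E → ℝ) : ℝ :=
  (1 / 2) * ∑ e, d e * (x e ^ 2 + lam * |x e|)

theorem exists_flowCost_sub_smul_lt {d : E → ℝ} (hd : ∀ e, 0 < d e) {lam : ℝ} (hlam : 0 ≤ lam)
    {σ x : E → ℝ} (hσ : ConformalTo σ x) (hσ0 : σ ≠ 0) :
    ∃ t : ℝ, flowCost d lam (x - t • σ) < flowCost d lam x := by
  have hev : ∀ᶠ t in 𝓝[>] (0 : ℝ), ∀ e, σ e ≠ 0 → |x e - t * σ e| < |x e| :=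
    eventually_all.mpr fun e => eventually_imp_distrib_left.mpr
      fun he => eventually_abs_sub_mul_lt (hσ e he)
  obtain ⟨t, ht⟩ := hev.exists
  have hterm : ∀ e, σ e ≠ 0 → d e * ((x - t • σ) e ^ 2 + lam * |(x - t • σ) e|)
      < d e * (x e ^ 2 + lam * |x e|) := by
    intro e he
    have habs : |(x - t • σ) e| < |x e| := ht e he
    have hsq := sq_lt_sq.mpr habs
    have hlin := mul_le_mul_of_nonneg_left habs.le hlam
    exact mul_lt_mul_of_pos_left (by linarith) (hd e)
  obtain ⟨e₀, he₀⟩ := Function.ne_iff.mp hσ0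
  refine ⟨t, mul_lt_mul_of_pos_left (Finset.sum_lt_sum (fun e _ => ?_)
    ⟨e₀, Finset.mem_univ _, hterm e₀ he₀⟩) one_half_pos⟩
  by_cases he : σ e = 0
  · simp [he]
  · exact (hterm e he).le

end Cost

section Incidence

variable {V E : Type*} {ends : E → V × V} {A : Matrix V E ℝ} {x : E → ℝ}

def IsIncidenceMatrix [DecidableEq V] (ends : E → V × V) (A : Matrix V E ℝ) : Prop :=
  ∀ e, A.col e = Pi.single (ends e).1 1 - Pi.single (ends e).2 1

def FlowStep (ends : E → V × V) (x : E → ℝ) (u v : V) : Prop :=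
  ∃ e, (ends e = (u, v) ∧ 0 < x e) ∨ (ends e = (v, u) ∧ x e < 0)

theorem isIncidenceMatrix_of_apply [DecidableEq V] (hsimple : ∀ e, (ends e).1 ≠ (ends e).2)
    (hA : ∀ i e, A i e = if i = (ends e).1 then 1 else if i = (ends e).2 then -1 else 0) :
    IsIncidenceMatrix ends A := by
  intro e
  ext i
  rw [col_apply, hA, Pi.sub_apply, Pi.single_apply, Pi.single_apply]
  split_ifs with h₁ h₂
  · exact absurd (h₁.symm.trans h₂) (hsimple e)
  all_goals norm_num

theorem IsIncidenceMatrix.sum_mulVec_eq_zero [Fintype V] [Fintype E] [DecidableEq V]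
    (hA : IsIncidenceMatrix ends A) (x : E → ℝ) : ∑ v, (A *ᵥ x) v = 0 := by
  simp only [mulVec, dotProduct]
  rw [Finset.sum_comm]
  refine Finset.sum_eq_zero fun e _ => ?_
  have hcol : ∑ v, A v e = 0 := by
    simpa [col_apply] using congrArg (fun c => ∑ v, c v) (hA e)
  rw [← Finset.sum_mul, hcol, zero_mul]

theorem IsIncidenceMatrix.exists_conformalTo_of_flowStep [Fintype E] [DecidableEq V]
    [DecidableEq E] (hA : IsIncidenceMatrix ends A) {u v : V} (h : FlowStep ends x u v) :
    ∃ σ, ConformalTo σ x ∧ σ ≠ 0 ∧ A *ᵥ σ = Pi.single u 1 - Pi.single v 1 := by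
  obtain ⟨e, ⟨he, hx⟩ | ⟨he, hx⟩⟩ := h
  · refine ⟨Pi.single e 1, conformalTo_single (by simpa using hx), by simp, ?_⟩
    rw [mulVec_single_one, hA, he]
  · refine ⟨Pi.single e (-1 : ℝ), conformalTo_single (by simpa using hx), by simp, ?_⟩
    rw [Pi.single_neg, mulVec_neg, mulVec_single_one, hA, he, neg_sub]

theorem IsIncidenceMatrix.exists_conformalTo_of_transGen [Fintype E] [DecidableEq V]
    [DecidableEq E] (hA : IsIncidenceMatrix ends A) {u v : V}
    (h : TransGen (FlowStep ends x) u v) :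
    ∃ σ, ConformalTo σ x ∧ σ ≠ 0 ∧ A *ᵥ σ = Pi.single u 1 - Pi.single v 1 := by
  induction h with
  | single h => exact hA.exists_conformalTo_of_flowStep h
  | tail _ hbc ih =>
    obtain ⟨σ, hσ, hσ0, hAσ⟩ := ih
    obtain ⟨τ, hτ, -, hAτ⟩ := hA.exists_conformalTo_of_flowStep hbc
    refine ⟨σ + τ, hσ.add hτ, hσ.add_ne_zero hτ hσ0, ?_⟩
    rw [mulVec_add, hAσ, hAτ, sub_add_sub_cancel]

theorem IsIncidenceMatrix.exists_flowStep_of_mul_neg [DecidableEq V]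
    (hA : IsIncidenceMatrix ends A) {v : V} {e : E} (h : A v e * x e < 0) :
    ∃ u, FlowStep ends x u v := by
  have hcol := congrFun (hA e) v
  rw [col_apply, Pi.sub_apply, Pi.single_apply, Pi.single_apply] at hcol
  rcases hends : ends e with ⟨t, w⟩
  rw [hends] at hcol
  split_ifs at hcol with ht hw hw'
  · rw [hcol, sub_self, zero_mul] at h; exact h.false.elim
  · rw [hcol, sub_zero, one_mul] at h
    exact ⟨w, e, .inr ⟨by rw [hends, show v = t from ht], h⟩⟩
  · rw [hcol, zero_sub, neg_one_mul, neg_neg_iff_pos] at h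
    exact ⟨t, e, .inl ⟨by rw [hends, show v = w from hw'], h⟩⟩
  · rw [hcol, sub_self, zero_mul] at h; exact h.false.elim

theorem IsIncidenceMatrix.exists_mul_pos_of_flowStep [DecidableEq V]
    (hsimple : ∀ e, (ends e).1 ≠ (ends e).2) (hA : IsIncidenceMatrix ends A) {u v : V}
    (h : FlowStep ends x u v) : ∃ e, 0 < A u e * x e := by
  obtain ⟨e, ⟨he, hx⟩ | ⟨he, hx⟩⟩ := h <;> refine ⟨e, ?_⟩ <;>
    have hne := hsimple e <;> rw [he] at hne <;> change 0 < A.col e u * x e <;> rw [hA, he]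
  · simpa [Pi.single_apply, hne] using hx
  · simpa [Pi.single_apply, hne.symm] using hx

theorem IsIncidenceMatrix.exists_flowStep_into_of_mulVec_neg [Fintype E] [DecidableEq V]
    (hA : IsIncidenceMatrix ends A) {v : V} (hv : (A *ᵥ x) v < 0) :
    ∃ u, FlowStep ends x u v := by
  obtain ⟨e, -, he⟩ := Finset.exists_lt_of_sum_lt (s := Finset.univ)
    (f := fun e => A v e * x e) (g := fun _ => 0) (by simpa [mulVec, dotProduct] using hv)
  exact hA.exists_flowStep_of_mul_neg he

theorem IsIncidenceMatrix.exists_flowStep_into_of_mulVec_nonpos [Fintype E] [DecidableEq V]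
    (hsimple : ∀ e, (ends e).1 ≠ (ends e).2) (hA : IsIncidenceMatrix ends A) {v w : V}
    (hv : (A *ᵥ x) v ≤ 0) (hout : FlowStep ends x v w) : ∃ u, FlowStep ends x u v := by
  by_contra! hin
  obtain ⟨e, he⟩ := hA.exists_mul_pos_of_flowStep hsimple hout
  have hterm : ∀ e', 0 ≤ A v e' * x e' := fun e' =>
    le_of_not_gt fun h => (hA.exists_flowStep_of_mul_neg h).elim hin
  exact hv.not_gt (Finset.sum_pos' (fun e' _ => hterm e') ⟨e, Finset.mem_univ _, he⟩)

end Incidence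

section Optimality

variable {L U E : Type*} {ends : E → (L ⊕ U) × (L ⊕ U)} {A : Matrix (L ⊕ U) E ℝ}
  {d : E → ℝ} {lam : ℝ} {x : E → ℝ}

theorem IsIncidenceMatrix.not_transGen_flowStep_of_isMinOn [Fintype E] [DecidableEq L]
    [DecidableEq U] [DecidableEq E] (hA : IsIncidenceMatrix ends A)
    (hd : ∀ e, 0 < d e) (hlam : 0 ≤ lam)
    (hx : IsMinOn (flowCost d lam)
      {z | A.submatrix Sum.inr id *ᵥ z = A.submatrix Sum.inr id *ᵥ x} x)
    {u v : L ⊕ U} (huv : TransGen (FlowStep ends x) u v)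
    (hU : ∀ j, (Pi.single u 1 - Pi.single v 1 : L ⊕ U → ℝ) (Sum.inr j) = 0) : False := by
  obtain ⟨σ, hσ, hσ0, hAσ⟩ := hA.exists_conformalTo_of_transGen huv
  obtain ⟨t, ht⟩ := exists_flowCost_sub_smul_lt hd hlam hσ hσ0
  have hσU : A.submatrix Sum.inr id *ᵥ σ = 0 := by
    funext j
    change (A *ᵥ σ) (Sum.inr j) = 0
    rw [hAσ, hU]
  have hfeas : A.submatrix Sum.inr id *ᵥ (x - t • σ) = A.submatrix Sum.inr id *ᵥ x := by
    rw [mulVec_sub, mulVec_smul, hσU, smul_zero, sub_zero]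
  exact (isMinOn_iff.mp hx _ hfeas).not_gt ht

theorem IsIncidenceMatrix.mulVec_inl_nonneg_of_isMinOn [Fintype L] [Fintype U] [Fintype E]
    [DecidableEq L] [DecidableEq U] [DecidableEq E]
    (hsimple : ∀ e, (ends e).1 ≠ (ends e).2) (hA : IsIncidenceMatrix ends A)
    (hd : ∀ e, 0 < d e) (hlam : 0 ≤ lam)
    (hx : IsMinOn (flowCost d lam)
      {z | A.submatrix Sum.inr id *ᵥ z = A.submatrix Sum.inr id *ᵥ x} x)
    (hU : ∀ j, (A *ᵥ x) (Sum.inr j) ≤ 0) (i : L) : 0 ≤ (A *ᵥ x) (Sum.inl i) := by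
  by_contra! hi
  set S := {u | TransGen (FlowStep ends x) u (Sum.inl i)}
  have hS : S.Nonempty := by
    obtain ⟨u, hu⟩ := hA.exists_flowStep_into_of_mulVec_neg hi
    exact ⟨u, .single hu⟩
  have hpred : ∀ a ∈ S, ∃ b ∈ S, FlowStep ends x b a := by
    intro a ha
    obtain ⟨c, hac, -⟩ := TransGen.head'_iff.mp ha
    rcases a with i' | j
    · exact (hA.not_transGen_flowStep_of_isMinOn hd hlam hx ha (by simp)).elim
    · obtain ⟨b, hb⟩ := hA.exists_flowStep_into_of_mulVec_nonpos hsimple (hU j) hac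
      exact ⟨b, .head hb ha, hb⟩
  obtain ⟨a, ha⟩ := Finite.exists_transGen_self_of_forall_exists_rel hS hpred
  exact hA.not_transGen_flowStep_of_isMinOn hd hlam hx ha (by simp)

theorem IsIncidenceMatrix.sum_mulVec_inl_eq_neg_sum_mulVec_inr [Fintype L] [Fintype U]
    [Fintype E] [DecidableEq L] [DecidableEq U] (hA : IsIncidenceMatrix ends A) (x : E → ℝ) :
    ∑ i, (A *ᵥ x) (Sum.inl i) = -∑ j, (A *ᵥ x) (Sum.inr j) := by
  rw [eq_neg_iff_add_eq_zero, ← Fintype.sum_sum_type, hA.sum_mulVec_eq_zero]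

end Optimality

theorem stmt_6_general (nl nu m : ℕ) (hnl : 0 < nl)
    (ends : Fin m → (Fin nl ⊕ Fin nu) × (Fin nl ⊕ Fin nu))
    (hsimple : ∀ e, (ends e).1 ≠ (ends e).2)
    (A : Matrix (Fin nl ⊕ Fin nu) (Fin m) ℝ)
    (hA : ∀ i e, A i e =
      if i = (ends e).1 then 1 else if i = (ends e).2 then -1 else 0)
    (d : Fin m → ℝ) (hd : ∀ e, 0 < d e)
    (lam : ℝ) (hlam : 0 ≤ lam)
    (F : (Fin m → ℝ) → ℝ)
    (hF : F = fun x => (1 / 2) * ∑ e, d e * ((x e) ^ 2 + lam * |x e|))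
    (s : Fin nu) (b : Fin nu → ℝ)
    (hb : b = fun j => if j = s then (-1 : ℝ) else 0)
    (xstar : Fin m → ℝ)
    (hfeas : A.submatrix Sum.inr id *ᵥ xstar = b)
    (hopt : ∀ z, A.submatrix Sum.inr id *ᵥ z = b → F xstar ≤ F z)
    (w : Fin nl → ℝ) (hw : w = A.submatrix Sum.inl id *ᵥ xstar)
    (fl : Fin nl → ℝ) :
    (∀ i, 0 ≤ w i) ∧ (∑ i, w i = 1) ∧
    (Finset.univ.inf' (Finset.univ_nonempty_iff.mpr ⟨⟨0, hnl⟩⟩) fl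
        ≤ ∑ i, w i * fl i) ∧
    (∑ i, w i * fl i
        ≤ Finset.univ.sup' (Finset.univ_nonempty_iff.mpr ⟨⟨0, hnl⟩⟩) fl) := by
  subst hF hw
  have hinc := isIncidenceMatrix_of_apply hsimple hA
  have hx : IsMinOn (flowCost d lam)
      {z | A.submatrix Sum.inr id *ᵥ z = A.submatrix Sum.inr id *ᵥ xstar} xstar :=
    isMinOn_iff.mpr fun z hz => hopt z (hz.trans hfeas)
  have hU (j : Fin nu) : (A *ᵥ xstar) (Sum.inr j) = b j := congrFun hfeas j
  have hpos : ∀ i, 0 ≤ (A.submatrix Sum.inl id *ᵥ xstar) i :=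
    hinc.mulVec_inl_nonneg_of_isMinOn hsimple hd hlam hx fun j => by
      rw [hU, hb]; dsimp only; split_ifs <;> norm_num
  have hsum : ∑ i, (A.submatrix Sum.inl id *ᵥ xstar) i = 1 := by
    change ∑ i, (A *ᵥ xstar) (Sum.inl i) = 1
    simp [hinc.sum_mulVec_inl_eq_neg_sum_mulVec_inr, hU, hb]
  have hmass := Finset.centerMass_eq_of_sum_1 _ fl hsum
  have hmass_pos : 0 < ∑ i, (A.submatrix Sum.inl id *ᵥ xstar) i := hsum ▸ one_pos
  refine ⟨hpos, hsum, ?_, ?_⟩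
  · exact (Finset.inf_le_centerMass (fun i _ => hpos i) hmass_pos).trans_eq hmass
  · exact hmass.symm.trans_le (Finset.centerMass_le_sup (fun i _ => hpos i) hmass_pos)

/-- Maximum principle for flow-based weights: the optimal flow
yields nonnegative weights summing to one, so the prediction
`f(s) = Σᵢ wᵢ f(i)` lies between the smallest and largest label values. -/
theorem stmt_6 (nl nu m : ℕ) (hnl : 0 < nl)
    (ends : Fin m → (Fin nl ⊕ Fin nu) × (Fin nl ⊕ Fin nu))
    (hsimple : ∀ e, (ends e).1 ≠ (ends e).2)
    (hconn : ∀ i j : Fin nl ⊕ Fin nu,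
      Relation.ReflTransGen (fun u v => ∃ e, ends e = (u, v) ∨ ends e = (v, u)) i j)
    (A : Matrix (Fin nl ⊕ Fin nu) (Fin m) ℝ)
    (hA : ∀ i e, A i e =
      if i = (ends e).1 then 1 else if i = (ends e).2 then -1 else 0)
    (d : Fin m → ℝ) (hd : ∀ e, 0 < d e)
    (lam : ℝ) (hlam : 0 ≤ lam)
    (F : (Fin m → ℝ) → ℝ)
    (hF : F = fun x => (1 / 2) * ∑ e, d e * ((x e) ^ 2 + lam * |x e|))
    (s : Fin nu) (b : Fin nu → ℝ)
    (hb : b = fun j => if j = s then (-1 : ℝ) else 0)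
    (xstar : Fin m → ℝ)
    (hfeas : A.submatrix Sum.inr id *ᵥ xstar = b)
    (hopt : ∀ z, A.submatrix Sum.inr id *ᵥ z = b → F xstar ≤ F z)
    (w : Fin nl → ℝ) (hw : w = A.submatrix Sum.inl id *ᵥ xstar)
    (fl : Fin nl → ℝ) :
    (∀ i, 0 ≤ w i) ∧ (∑ i, w i = 1) ∧
    (Finset.univ.inf' (Finset.univ_nonempty_iff.mpr ⟨⟨0, hnl⟩⟩) fl
        ≤ ∑ i, w i * fl i) ∧
    (∑ i, w i * fl i
        ≤ Finset.univ.sup' (Finset.univ_nonempty_iff.mpr ⟨⟨0, hnl⟩⟩) fl) :=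
  stmt_6_general nl nu m hnl ends hsimple A hA d hd lam hlam F hF s b hb xstar hfeas hopt w hw fl
end

section
/- If the underlying graph is connected and there is at least one labeled node, the principal submatrix L_{uu} = A_u D^{-1} A_u^T of the Laplacian L = A D^{-1} A^T indexed by the unlabeled nodes is positive definite (hence invertible). -/
/-!
`L_uu = A_u D⁻¹ A_uᵀ` is a congruence of the positive definite matrix `D⁻¹`, so it is positive
definite as soon as `x ↦ xᵀ A_u` is injective. If `xᵀ A_u = 0`, the extension of `x` by zero on the
labeled nodes has equal values at the two ends of every edge; by connectivity it is constant, and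
since some node is labeled it vanishes.
-/

open Matrix

lemma vecMul_signedIncidence_apply {R V E : Type*} [Ring R] [Fintype V] [DecidableEq V]
    {ends : E → V × V} (hloop : ∀ e, (ends e).1 ≠ (ends e).2)
    {A : Matrix V E R}
    (hA : ∀ i e, A i e = if i = (ends e).1 then 1 else if i = (ends e).2 then -1 else 0)
    (y : V → R) (e : E) :
    (y ᵥ* A) e = y (ends e).1 - y (ends e).2 := by
  have hterm : ∀ i, y i * A i e =
      (if i = (ends e).1 then y (ends e).1 else 0) - (if i = (ends e).2 then y (ends e).2 else 0) := by
    intro i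
    rw [hA]
    by_cases h₁ : i = (ends e).1
    · subst h₁; simp [hloop e]
    · by_cases h₂ : i = (ends e).2 <;> simp [h₁, h₂, (hloop e).symm]
  simp only [vecMul, dotProduct, hterm, Finset.sum_sub_distrib, Finset.sum_ite_eq',
    Finset.mem_univ, if_true]

lemma vecMul_submatrix_inr {R L U E : Type*} [NonUnitalNonAssocSemiring R] [Fintype L]
    [Fintype U] (A : Matrix (L ⊕ U) E R) (x : U → R) :
    x ᵥ* A.submatrix Sum.inr id = Sum.elim 0 x ᵥ* A := by
  ext e
  simp [vecMul, dotProduct, Fintype.sum_sum_type]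

lemma vecMul_submatrix_inr_injective {R L U E : Type*} [Ring R] [Fintype L] [Fintype U]
    [DecidableEq L] [DecidableEq U] [Nonempty L] {ends : E → (L ⊕ U) × (L ⊕ U)}
    (hloop : ∀ e, (ends e).1 ≠ (ends e).2)
    (hconn : ∀ i j : L ⊕ U,
      Relation.ReflTransGen (fun u v => ∃ e, ends e = (u, v) ∨ ends e = (v, u)) i j)
    {A : Matrix (L ⊕ U) E R}
    (hA : ∀ i e, A i e = if i = (ends e).1 then 1 else if i = (ends e).2 then -1 else 0) :
    Function.Injective (A.submatrix Sum.inr id).vecMul := by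
  rw [← coe_vecMulLinear, injective_iff_map_eq_zero]
  intro x hx
  set y : L ⊕ U → R := Sum.elim 0 x
  have hy : y ᵥ* A = 0 := by rw [← vecMul_submatrix_inr]; exact hx
  have hflat : ∀ e, y (ends e).1 = y (ends e).2 := fun e => sub_eq_zero.mp <| by
    rw [← vecMul_signedIncidence_apply hloop hA, hy, Pi.zero_apply]
  have hedge : ∀ u v, (∃ e, ends e = (u, v) ∨ ends e = (v, u)) → y u = y v := by
    rintro u v ⟨e, he | he⟩ <;> have := hflat e <;> rw [he] at this
    exacts [this, this.symm]
  obtain ⟨l⟩ := ‹Nonempty L›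
  ext j
  have hconst := (hconn (.inr j) (.inl l)).lift y hedge
  rwa [Relation.reflTransGen_eq_self] at hconst

/-- If the graph is connected and at least one node is labeled,
the unlabeled principal block `L_uu = A_u D⁻¹ A_uᵀ` of the Laplacian is
positive definite. -/
theorem stmt_9 (nl nu m : ℕ) (hnl : 0 < nl)
    (ends : Fin m → (Fin nl ⊕ Fin nu) × (Fin nl ⊕ Fin nu))
    (hsimple : ∀ e, (ends e).1 ≠ (ends e).2)
    (hconn : ∀ i j : Fin nl ⊕ Fin nu,
      Relation.ReflTransGen (fun u v => ∃ e, ends e = (u, v) ∨ ends e = (v, u)) i j)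
    (A : Matrix (Fin nl ⊕ Fin nu) (Fin m) ℝ)
    (hA : ∀ i e, A i e =
      if i = (ends e).1 then 1 else if i = (ends e).2 then -1 else 0)
    (d : Fin m → ℝ) (hd : ∀ e, 0 < d e) :
    (A.submatrix Sum.inr id * (Matrix.diagonal d)⁻¹ *
      (A.submatrix Sum.inr id)ᵀ).PosDef := by
  have : Nonempty (Fin nl) := ⟨⟨0, hnl⟩⟩
  have hDinv : ((Matrix.diagonal d)⁻¹).PosDef := (PosDef.diagonal hd).inv
  simpa only [conjTranspose_eq_transpose_of_trivial] using
    hDinv.mul_mul_conjTranspose_same (vecMul_submatrix_inr_injective hsimple hconn hA)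
end
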